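/- arXiv:math/0509708 — 4 statements merged into one kernel-verified Lean document; each statement's English description precedes it below -/
import Mathlib

section
/- If z = (z₁, z₂) ∈ ℂ² satisfies 0 ≤ Re z₁, 0 ≤ Im z₁, Re z₁ + Im z₁ ≤ 1, |Re z₂| ≤ 1/2 and |z₂| ≥ 1, then Im z₂ - (1/2)|z₁|² ≥ (√3 - 1)/2. -/
theorem stmt_0 (z₁ z₂ : ℂ)
    (h1 : 0 ≤ z₁.re) (h2 : 0 ≤ z₁.im) (h3 : z₁.re + z₁.im ≤ 1)
    (h4 : |z₂.re| ≤ 1/2) (h5 : 1 ≤ ‖z₂‖) (h6 : 0 < z₂.im) :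
    (Real.sqrt 3 - 1) / 2 ≤ z₂.im - (1/2) * ‖z₁‖^2 := by
  have hs3 : Real.sqrt 3 ^ 2 = 3 := Real.sq_sqrt (by norm_num)
  have hs3pos : 0 < Real.sqrt 3 := Real.sqrt_pos.mpr (by norm_num)
  have hz2 : 1 ≤ z₂.re ^ 2 + z₂.im ^ 2 := by
    have := Complex.sq_norm z₂
    have h5' : 1 ≤ ‖z₂‖ ^ 2 := by nlinarith [norm_nonneg z₂]
    rw [this, Complex.normSq_apply] at h5'
    nlinarith
  have hre : z₂.re ^ 2 ≤ 1/4 := by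
    have := abs_le.mp h4
    nlinarith
  have him : Real.sqrt 3 / 2 ≤ z₂.im := by
    nlinarith [sq_nonneg (z₂.im - Real.sqrt 3 / 2)]
  have hz1 : ‖z₁‖ ^ 2 ≤ 1 := by
    rw [Complex.sq_norm, Complex.normSq_apply]
    nlinarith
  nlinarith
end

section
/- For all real x₁, y₁, x₂, y₂ with 0 ≤ x₁, 0 ≤ y₁, x₁ + y₁ ≤ 1, -1/2 ≤ x₂ < 0, x₂² + y₂² ≥ 1, y₂ > 0, and any real r ≤ 0, one has (r + 2y₁ + x₂)² + (2 - 2x₁ + y₂)² ≥ 1. -/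
theorem stmt_6 (x₁ y₁ x₂ y₂ r : ℝ)
    (hx₁ : 0 ≤ x₁) (hy₁ : 0 ≤ y₁) (hsum : x₁ + y₁ ≤ 1)
    (hx₂l : -(1/2) ≤ x₂) (hx₂u : x₂ < 0)
    (habs : 1 ≤ x₂^2 + y₂^2) (hy₂ : 0 < y₂) (hr : r ≤ 0) :
    1 ≤ (r + 2*y₁ + x₂)^2 + (2 - 2*x₁ + y₂)^2 := by
  have hxy : 0 ≤ x₂ + y₂ := by nlinarith [sq_nonneg (y₂ + x₂), sq_nonneg (y₂ - x₂)]
  rcases le_or_gt (2*y₁ + x₂) 0 with h | h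
  · -- a ≤ 2y₁+x₂ ≤ 0 so a² ≥ (2y₁+x₂)², and b ≥ 2y₁+y₂
    nlinarith [sq_nonneg y₁, mul_nonneg hy₁ hxy, sq_nonneg (r + 2*y₁ + x₂),
      mul_nonneg (neg_nonneg.mpr hr) (neg_nonneg.mpr h),
      mul_nonneg (sub_nonneg.mpr hsum) hy₂.le, mul_nonneg (sub_nonneg.mpr hsum) hy₁]
  · -- b ≥ -x₂ + y₂ ≥ 1
    have hb : 1 ≤ 2 - 2*x₁ + y₂ := by
      nlinarith [mul_nonneg (le_of_lt (neg_pos.mpr hx₂u)) (le_of_lt hy₂)]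
    nlinarith [sq_nonneg (r + 2*y₁ + x₂)]
end

section
/- For all real x₁, y₁, x₂, y₂ with √3/2 ≤ x₁ ≤ 1, 0 ≤ y₁ ≤ 1 - x₁, |x₂| ≤ 1/2, y₂ ≥ √3/2, and any real r with |r| ≥ 4, one has (r/2 + 2y₁ + 2x₂)² + (1 - 2x₁ + 2y₂)² ≥ 1. -/
theorem stmt_17 (x₁ y₁ x₂ y₂ r : ℝ)
    (hx₁l : Real.sqrt 3 / 2 ≤ x₁) (hx₁u : x₁ ≤ 1)
    (hy₁l : 0 ≤ y₁) (hy₁u : y₁ ≤ 1 - x₁)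
    (hx₂ : |x₂| ≤ 1/2) (hy₂ : Real.sqrt 3 / 2 ≤ y₂)
    (hr : 4 ≤ |r|) :
    1 ≤ (r/2 + 2*y₁ + 2*x₂)^2 + (1 - 2*x₁ + 2*y₂)^2 := by
  set s := Real.sqrt 3 with hsdef
  have h3 : s ^ 2 = 3 := Real.sq_sqrt (by norm_num)
  have hsl : (1.7:ℝ) ≤ s := by nlinarith [Real.sqrt_nonneg 3]
  have hsu : s ≤ (1.8:ℝ) := by nlinarith [Real.sqrt_nonneg 3]
  have hx2l : -(1/2:ℝ) ≤ x₂ := neg_le_of_abs_le hx₂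
  have hx2u : x₂ ≤ 1/2 := le_of_abs_le hx₂
  set A := r/2 + 2*y₁ + 2*x₂ with hA
  set B := 1 - 2*x₁ + 2*y₂ with hB
  have hBl : s - 1 ≤ B := by rw [hB]; linarith
  have hA2 : (s-1)^2 ≤ A^2 := by
    rcases abs_cases r with ⟨h1, h2⟩ | ⟨h1, h2⟩
    · have : s - 1 ≤ A := by rw [hA]; linarith
      nlinarith
    · have : A ≤ -(s-1) := by rw [hA]; linarith
      nlinarith
  have hB2 : (s-1)^2 ≤ B^2 := by nlinarith
  nlinarith
end

section
/- Let S : ℂ² → ℂ² be defined by S(z₁, z₂) = (i·conj(z₁), -conj(z₂)). Then S² = id, and for all z ∈ ℂ²: |z₂|² is invariant under S; |i - (1+i)z₁ + z₂|² is invariant under S; S interchanges |−1 + i - (1+i)z₁ + z₂|² and |1 + i - (1+i)z₁ + z₂|²; and S interchanges |−1 + i - 2iz₁ + 2z₂|² with |1 + i - 2z₁ + 2z₂|², and |1 + i - 2iz₁ + 2z₂|² with |−1 + i - 2z₁ + 2z₂|². -/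
open Complex

noncomputable def PicardS (z : ℂ × ℂ) : ℂ × ℂ :=
  (I * (starRingEnd ℂ) z.1, -(starRingEnd ℂ) z.2)

theorem stmt_19 :
    (∀ z : ℂ × ℂ, PicardS (PicardS z) = z) ∧
    (∀ z : ℂ × ℂ,
      ‖(PicardS z).2‖ ^ 2 = ‖z.2‖ ^ 2 ∧
      ‖I - (1 + I) * (PicardS z).1 + (PicardS z).2‖ ^ 2
        = ‖I - (1 + I) * z.1 + z.2‖ ^ 2 ∧
      ‖-1 + I - (1 + I) * (PicardS z).1 + (PicardS z).2‖ ^ 2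
        = ‖1 + I - (1 + I) * z.1 + z.2‖ ^ 2 ∧
      ‖1 + I - (1 + I) * (PicardS z).1 + (PicardS z).2‖ ^ 2
        = ‖-1 + I - (1 + I) * z.1 + z.2‖ ^ 2 ∧
      ‖-1 + I - 2 * I * (PicardS z).1 + 2 * (PicardS z).2‖ ^ 2
        = ‖1 + I - 2 * z.1 + 2 * z.2‖ ^ 2 ∧
      ‖1 + I - 2 * I * (PicardS z).1 + 2 * (PicardS z).2‖ ^ 2
        = ‖-1 + I - 2 * z.1 + 2 * z.2‖ ^ 2) := by
  constructor
  · intro z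
    simp [PicardS, mul_comm]
    ring_nf
    simp [Complex.ext_iff]
  · intro z
    obtain ⟨⟨a, b⟩, ⟨c, d⟩⟩ := z
    refine ⟨?_, ?_, ?_, ?_, ?_, ?_⟩ <;>
      simp only [PicardS, ← Complex.normSq_eq_norm_sq, Complex.normSq_apply] <;>
      simp [Complex.ext_iff, Complex.add_re, Complex.add_im, Complex.mul_re, Complex.mul_im] <;>
      ring
end
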